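/- arXiv:2402.17462 — 3 statements merged into one kernel-verified Lean document; each statement's English description precedes it below -/
import Mathlib

section
/- Let 𝒫 be a nonempty set of probability measures on a measurable space and let X be a random variable with sup_{P∈𝒫} E_P[X²] < ∞. Define the sublinear expectation Ē[Z] = sup_{P∈𝒫} E_P[Z]. Then min over μ ∈ ℝ of Ē[(X-μ)²] = sup over P in the convex hull of 𝒫 of Var_P(X). -/
open MeasureTheory ENNReal

variable {Ω : Type*} [MeasurableSpace Ω]

/-- Classical covariance of `X` and `Y` under `P`. -/
noncomputable def covP (P : Measure Ω) (X Y : Ω → ℝ) : ℝ :=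
  (∫ ω, X ω * Y ω ∂P) - (∫ ω, X ω ∂P) * (∫ ω, Y ω ∂P)

/-- Classical variance of `X` under `P`. -/
noncomputable def varP (P : Measure Ω) (X : Ω → ℝ) : ℝ :=
  (∫ ω, (X ω) ^ 2 ∂P) - (∫ ω, X ω ∂P) ^ 2

/-- The convex hull of a set of measures: all finite convex combinations. -/
def convHullP (S : Set (Measure Ω)) : Set (Measure Ω) :=
  { Q | ∃ (n : ℕ) (w : Fin n → ℝ≥0∞) (P : Fin n → Measure Ω),
      (∑ i, w i = 1) ∧ (∀ i, P i ∈ S) ∧ Q = ∑ i, w i • P i }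

/-!
Encode a law by its mean and second moment `m(P) = (E_P X, E_P X²) ∈ ℝ²`. Then `E_P[(X - μ)²]`
is an affine function of `m(P)`, `Var_P X` a concave one, and `m` maps mixtures to convex
combinations, so everything happens in a bounded set `T ⊆ ℝ²`.

The upper mean squared deviation `F(μ) = sup_{p ∈ T} (p₂ - 2μp₁ + μ²)` is a supremum of
parabolas, hence convex and coercive, and attains its minimum at some `μ₀`. It dominates the
variance at every point of the convex hull of `T`, since an affine function is maximised over a
convex hull on the set itself. Conversely, by minimality of `μ₀`, near-maximisers of `F(μ₀ + t)`
and `F(μ₀ - t)` have means below `μ₀ + t` and above `μ₀ - t` respectively while still nearly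
maximising `F(μ₀)`; the segment joining them contains a point whose mean is within `t` of `μ₀`,
and its variance is `F(μ₀) - O(t)`.
-/
open Set Filter Topology Bornology

/-- The mean squared deviation from `μ` of a law with mean `p.1` and second moment `p.2`. -/
def meanSqDev (μ : ℝ) (p : ℝ × ℝ) : ℝ := p.2 - 2 * μ * p.1 + μ ^ 2

def momentVar (p : ℝ × ℝ) : ℝ := p.2 - p.1 ^ 2

noncomputable def upperMeanSqDev (T : Set (ℝ × ℝ)) (μ : ℝ) : ℝ := sSup (meanSqDev μ '' T)

lemma meanSqDev_eq_momentVar_add (μ : ℝ) (p : ℝ × ℝ) :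
    meanSqDev μ p = momentVar p + (p.1 - μ) ^ 2 := by
  unfold meanSqDev momentVar; ring

lemma momentVar_le_meanSqDev (μ : ℝ) (p : ℝ × ℝ) : momentVar p ≤ meanSqDev μ p := by
  rw [meanSqDev_eq_momentVar_add]; exact le_add_of_nonneg_right (sq_nonneg _)

lemma meanSqDev_add_smul {a b : ℝ} (hab : a + b = 1) (μ : ℝ) (p q : ℝ × ℝ) :
    meanSqDev μ (a • p + b • q) = a * meanSqDev μ p + b * meanSqDev μ q := by
  simp only [meanSqDev, Prod.fst_add, Prod.snd_add, Prod.smul_fst, Prod.smul_snd, smul_eq_mul]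
  linear_combination (-μ ^ 2) * hab

lemma convexOn_meanSqDev (μ : ℝ) : ConvexOn ℝ univ (meanSqDev μ) :=
  ⟨convex_univ, fun p _ q _ _ _ _ _ hab => (meanSqDev_add_smul hab μ p q).le⟩

lemma concaveOn_meanSqDev (μ : ℝ) : ConcaveOn ℝ univ (meanSqDev μ) :=
  ⟨convex_univ, fun p _ q _ _ _ _ _ hab => (meanSqDev_add_smul hab μ p q).ge⟩

lemma convexOn_meanSqDev_left (p : ℝ × ℝ) : ConvexOn ℝ univ fun μ => meanSqDev μ p := by
  refine ⟨convex_univ, fun μ _ ν _ a b ha hb hab => ?_⟩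
  obtain rfl : b = 1 - a := by linarith
  simp only [meanSqDev, smul_eq_mul]
  nlinarith [mul_nonneg (mul_nonneg ha hb) (sq_nonneg (μ - ν))]

lemma exists_mem_segment_fst_mem_Icc {p q : ℝ × ℝ} {l u : ℝ} (hp : p.1 ≤ u) (hq : l ≤ q.1)
    (hlu : l ≤ u) : ∃ z ∈ segment ℝ p q, z.1 ∈ Icc l u := by
  have hx : max l (min p.1 q.1) ∈ segment ℝ p.1 q.1 := by
    rw [segment_eq_uIcc, mem_uIcc]
    rcases le_total p.1 q.1 with h | h
    · rw [min_eq_left h]; exact Or.inl ⟨le_max_right _ _, max_le hq h⟩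
    · rw [min_eq_right h, max_eq_right hq]; exact Or.inr ⟨le_rfl, h⟩
  obtain ⟨a, b, ha, hb, hab, hx⟩ := hx
  refine ⟨a • p + b • q, ⟨a, b, ha, hb, hab, rfl⟩, ?_⟩
  simp only [Prod.fst_add, Prod.smul_fst, smul_eq_mul] at hx ⊢
  rw [hx]
  exact ⟨le_max_left _ _, max_le hlu ((min_le_left _ _).trans hp)⟩

section UpperMeanSqDev

variable {T : Set (ℝ × ℝ)}

lemma bddAbove_meanSqDev_image (hT : IsBounded T) (μ : ℝ) : BddAbove (meanSqDev μ '' T) := by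
  obtain ⟨C, hC⟩ := hT.exists_norm_le
  refine ⟨C + 2 * |μ| * C + μ ^ 2, forall_mem_image.2 fun p hp => ?_⟩
  have h1 : |p.1| ≤ C := (norm_fst_le p).trans (hC p hp)
  have h2 : p.2 ≤ C := (le_abs_self p.2).trans ((norm_snd_le p).trans (hC p hp))
  have h3 : -(2 * μ * p.1) ≤ 2 * |μ| * C :=
    calc -(2 * μ * p.1) ≤ |2 * μ * p.1| := neg_le_abs _
      _ = 2 * |μ| * |p.1| := by rw [abs_mul, abs_mul, abs_two]
      _ ≤ 2 * |μ| * C := by gcongr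
  unfold meanSqDev; linarith

lemma meanSqDev_le_upperMeanSqDev (hT : IsBounded T) {p : ℝ × ℝ} (hp : p ∈ T) (μ : ℝ) :
    meanSqDev μ p ≤ upperMeanSqDev T μ :=
  le_csSup (bddAbove_meanSqDev_image hT μ) (mem_image_of_mem _ hp)

lemma momentVar_le_upperMeanSqDev (hT : IsBounded T) {z : ℝ × ℝ} (hz : z ∈ convexHull ℝ T)
    (μ : ℝ) : momentVar z ≤ upperMeanSqDev T μ := by
  obtain ⟨p, hp, hzp⟩ := (convexOn_meanSqDev μ).exists_ge_of_mem_convexHull (subset_univ T) hz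
  exact (momentVar_le_meanSqDev μ z).trans (hzp.trans (meanSqDev_le_upperMeanSqDev hT hp μ))

lemma convexOn_upperMeanSqDev (hT : IsBounded T) (hne : T.Nonempty) :
    ConvexOn ℝ univ (upperMeanSqDev T) := by
  refine ⟨convex_univ, fun μ _ ν _ a b ha hb hab => csSup_le (hne.image _) ?_⟩
  refine forall_mem_image.2 fun p hp =>
    ((convexOn_meanSqDev_left p).2 trivial trivial ha hb hab).trans ?_
  simp only [smul_eq_mul]
  gcongr <;> exact meanSqDev_le_upperMeanSqDev hT hp _

lemma tendsto_upperMeanSqDev_cocompact (hT : IsBounded T) (hne : T.Nonempty) :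
    Tendsto (upperMeanSqDev T) (cocompact ℝ) atTop := by
  obtain ⟨p, hp⟩ := hne
  have hdist : Tendsto (fun μ => dist μ p.1 ^ 2 + momentVar p) (cocompact ℝ) atTop :=
    tendsto_atTop_add_const_right _ _
      ((tendsto_pow_atTop two_ne_zero).comp (tendsto_dist_right_cocompact_atTop p.1))
  refine tendsto_atTop_mono (fun μ => ?_) hdist
  rw [Real.dist_eq, sq_abs, add_comm, ← sq_abs, abs_sub_comm, sq_abs,
    ← meanSqDev_eq_momentVar_add]
  exact meanSqDev_le_upperMeanSqDev hT hp μ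

lemma exists_forall_upperMeanSqDev_le (hT : IsBounded T) (hne : T.Nonempty) :
    ∃ μ₀, ∀ μ, upperMeanSqDev T μ₀ ≤ upperMeanSqDev T μ :=
  (convexOn_upperMeanSqDev hT hne).locallyLipschitz.continuous.exists_forall_le
    (tendsto_upperMeanSqDev_cocompact hT hne)

lemma exists_lt_meanSqDev_add_of_forall_le (hne : T.Nonempty) {μ₀ : ℝ}
    (hmin : ∀ μ, upperMeanSqDev T μ₀ ≤ upperMeanSqDev T μ) {t : ℝ} (ht : t ≠ 0) :
    ∃ p ∈ T, upperMeanSqDev T μ₀ < meanSqDev μ₀ p + 2 * t * (μ₀ + t - p.1) := by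
  have hlt : upperMeanSqDev T μ₀ - t ^ 2 < upperMeanSqDev T (μ₀ + t) :=
    (sub_lt_self _ (by positivity)).trans_le (hmin _)
  obtain ⟨_, ⟨p, hp, rfl⟩, hp_lt⟩ := exists_lt_of_lt_csSup (hne.image _) hlt
  refine ⟨p, hp, ?_⟩
  -- `meanSqDev (μ₀ + t) p = meanSqDev μ₀ p + 2 * t * (μ₀ + t - p.1) - t ^ 2`
  unfold meanSqDev at hp_lt ⊢
  linarith

lemma upperMeanSqDev_le_of_forall_segment (hT : IsBounded T) (hne : T.Nonempty) {μ₀ : ℝ}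
    (hmin : ∀ μ, upperMeanSqDev T μ₀ ≤ upperMeanSqDev T μ) {c : ℝ}
    (hc : ∀ p ∈ T, ∀ q ∈ T, ∀ z ∈ segment ℝ p q, momentVar z ≤ c) :
    upperMeanSqDev T μ₀ ≤ c := by
  obtain ⟨C, hC⟩ := hT.exists_norm_le
  have hfst : ∀ p ∈ T, |p.1| ≤ C := fun p hp => (norm_fst_le p).trans (hC p hp)
  set err : ℝ → ℝ := fun t => c + 2 * t * (|μ₀| + t + C) + t ^ 2
  have key : ∀ t > 0, upperMeanSqDev T μ₀ ≤ err t := by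
    intro t ht
    obtain ⟨p, hp, hp_lt⟩ := exists_lt_meanSqDev_add_of_forall_le hne hmin ht.ne'
    obtain ⟨q, hq, hq_lt⟩ :=
      exists_lt_meanSqDev_add_of_forall_le hne hmin (neg_ne_zero.2 ht.ne')
    have hp_le := meanSqDev_le_upperMeanSqDev hT hp μ₀
    have hq_le := meanSqDev_le_upperMeanSqDev hT hq μ₀
    have hp1 : p.1 ≤ μ₀ + t := by nlinarith
    have hq1 : μ₀ - t ≤ q.1 := by nlinarith
    obtain ⟨z, hz, hz1⟩ := exists_mem_segment_fst_mem_Icc hp1 hq1 (by linarith)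
    have hz_min := (concaveOn_meanSqDev μ₀).min_le_of_mem_segment trivial trivial hz
    have hzμ : (z.1 - μ₀) ^ 2 ≤ t ^ 2 := sq_le_sq' (by linarith [hz1.1]) (by linarith [hz1.2])
    have hpC := abs_le.1 (hfst p hp)
    have hqC := abs_le.1 (hfst q hq)
    have hp_err : 2 * t * (μ₀ + t - p.1) ≤ 2 * t * (|μ₀| + t + C) := by
      gcongr; linarith [le_abs_self μ₀]
    have hq_err : 2 * -t * (μ₀ + -t - q.1) ≤ 2 * t * (|μ₀| + t + C) := by
      nlinarith [neg_abs_le μ₀]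
    have hz_gt : upperMeanSqDev T μ₀ - 2 * t * (|μ₀| + t + C) < meanSqDev μ₀ z :=
      (lt_min (by linarith) (by linarith)).trans_le hz_min
    have hz_eq := meanSqDev_eq_momentVar_add μ₀ z
    have hzc := hc p hp q hq z hz
    simp only [err]
    linarith
  have hlim : Tendsto err (𝓝[>] 0) (𝓝 c) := by
    have h : Tendsto err (𝓝 0) (𝓝 (err 0)) := (by fun_prop : Continuous err).tendsto 0
    simpa [err] using h.mono_left nhdsWithin_le_nhds
  exact ge_of_tendsto hlim (eventually_nhdsWithin_of_forall key)

theorem isLeast_range_upperMeanSqDev (hT : IsBounded T) (hne : T.Nonempty) {U : Set (ℝ × ℝ)}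
    (hUT : U ⊆ convexHull ℝ T) (hTU : ∀ p ∈ T, ∀ q ∈ T, segment ℝ p q ⊆ U) :
    IsLeast (range (upperMeanSqDev T)) (sSup (momentVar '' U)) := by
  obtain ⟨μ₀, hmin⟩ := exists_forall_upperMeanSqDev_le hT hne
  have ⟨p, hp⟩ := hne
  have hU : (momentVar '' U).Nonempty :=
    ⟨_, mem_image_of_mem _ (hTU p hp p hp (left_mem_segment ℝ p p))⟩
  have hle : ∀ μ, ∀ z ∈ U, momentVar z ≤ upperMeanSqDev T μ := fun μ _ hz =>
    momentVar_le_upperMeanSqDev hT (hUT hz) μ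
  have hsSup_le : ∀ μ, sSup (momentVar '' U) ≤ upperMeanSqDev T μ := fun μ =>
    csSup_le hU (forall_mem_image.2 (hle μ))
  have hbdd : BddAbove (momentVar '' U) := ⟨upperMeanSqDev T 0, forall_mem_image.2 (hle 0)⟩
  refine ⟨⟨μ₀, le_antisymm ?_ (hsSup_le μ₀)⟩, forall_mem_range.2 hsSup_le⟩
  exact upperMeanSqDev_le_of_forall_segment hT hne hmin fun p hp q hq z hz =>
    le_csSup hbdd (mem_image_of_mem _ (hTU p hp q hq hz))

end UpperMeanSqDev

noncomputable def moments (X : Ω → ℝ) (P : Measure Ω) : ℝ × ℝ :=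
  (∫ ω, X ω ∂P, ∫ ω, X ω ^ 2 ∂P)

lemma integral_sub_sq_eq_meanSqDev {P : Measure Ω} [IsProbabilityMeasure P] {X : Ω → ℝ}
    (hX : MemLp X 2 P) (μ : ℝ) : ∫ ω, (X ω - μ) ^ 2 ∂P = meanSqDev μ (moments X P) := by
  have h1 : Integrable X P := hX.integrable one_le_two
  have h2 : Integrable (fun ω => X ω ^ 2) P := hX.integrable_sq
  have h12 : Integrable (fun ω => X ω ^ 2 - 2 * μ * X ω) P := h2.sub (h1.const_mul _)
  have h : ∀ ω, (X ω - μ) ^ 2 = X ω ^ 2 - 2 * μ * X ω + μ ^ 2 := fun ω => by ring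
  simp_rw [h]
  rw [integral_add h12 (integrable_const _), integral_sub h2 (h1.const_mul _),
    integral_const_mul, integral_const]
  simp [meanSqDev, moments]

lemma moments_sum_smul {ι : Type*} [Fintype ι] {w : ι → ℝ≥0∞} (hw : ∀ i, w i ≠ ∞)
    {P : ι → Measure Ω} {X : Ω → ℝ} (hX : ∀ i, MemLp X 2 (P i))
    (hP : ∀ i, IsFiniteMeasure (P i)) :
    moments X (∑ i, w i • P i) = ∑ i, (w i).toReal • moments X (P i) := by
  have hint : ∀ {f : Ω → ℝ}, (∀ i, Integrable f (P i)) →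
      ∫ ω, f ω ∂(∑ i, w i • P i) = ∑ i, (w i).toReal * ∫ ω, f ω ∂(P i) := fun hf => by
    rw [integral_finsetSum_measure fun i _ => (hf i).smul_measure (hw i)]
    simp_rw [integral_smul_measure, smul_eq_mul]
  ext
  · simp only [moments, Prod.fst_sum, Prod.smul_fst, smul_eq_mul]
    exact hint fun i => have := hP i; (hX i).integrable one_le_two
  · simp only [moments, Prod.snd_sum, Prod.smul_snd, smul_eq_mul]
    exact hint fun i => (hX i).integrable_sq

section Mixtures

variable {S : Set (Measure Ω)} {X : Ω → ℝ}

lemma moments_mem_convexHull (hfin : ∀ P ∈ S, IsFiniteMeasure P)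
    (hX : ∀ P ∈ S, MemLp X 2 P) {Q : Measure Ω} (hQ : Q ∈ convHullP S) :
    moments X Q ∈ convexHull ℝ (moments X '' S) := by
  obtain ⟨n, w, P, hw, hPS, rfl⟩ := hQ
  have hw_top : ∀ i, w i ≠ ∞ := fun i => ne_top_of_le_ne_top one_ne_top
    (hw ▸ Finset.single_le_sum (fun _ _ => zero_le) (Finset.mem_univ i))
  rw [moments_sum_smul hw_top (fun i => hX _ (hPS i)) (fun i => hfin _ (hPS i))]
  refine (convex_convexHull ℝ _).sum_mem (fun _ _ => toReal_nonneg) ?_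
    fun i _ => subset_convexHull ℝ _ (mem_image_of_mem _ (hPS i))
  rw [← toReal_sum fun i _ => hw_top i, hw, toReal_one]

lemma segment_subset_moments_image_convHullP (hfin : ∀ P ∈ S, IsFiniteMeasure P)
    (hX : ∀ P ∈ S, MemLp X 2 P) {P Q : Measure Ω} (hP : P ∈ S) (hQ : Q ∈ S) :
    segment ℝ (moments X P) (moments X Q) ⊆ moments X '' convHullP S := by
  rintro _ ⟨a, b, ha, hb, hab, rfl⟩
  have hPQ : ∀ i, ![P, Q] i ∈ S := Fin.forall_fin_two.2 ⟨hP, hQ⟩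
  refine ⟨∑ i, ![ENNReal.ofReal a, ENNReal.ofReal b] i • ![P, Q] i,
    ⟨2, _, _, ?_, hPQ, rfl⟩, ?_⟩
  · simp [Fin.sum_univ_two, ← ofReal_add ha hb, hab]
  · rw [moments_sum_smul (Fin.forall_fin_two.2 ⟨ofReal_ne_top, ofReal_ne_top⟩)
      (fun i => hX _ (hPQ i)) (fun i => hfin _ (hPQ i))]
    simp [Fin.sum_univ_two, toReal_ofReal ha, toReal_ofReal hb]

lemma isBounded_moments_image (hprob : ∀ P ∈ S, IsProbabilityMeasure P)
    (hX : ∀ P ∈ S, MemLp X 2 P) {M : ℝ} (hM : ∀ P ∈ S, ∫ ω, X ω ^ 2 ∂P ≤ M) :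
    IsBounded (moments X '' S) := by
  refine (Metric.isBounded_Icc (-√M, 0) (√M, M)).subset <| forall_mem_image.2 fun P hP => ?_
  have := hprob P hP
  set m := moments X P
  have hvar : 0 ≤ momentVar m :=
    calc 0 ≤ ∫ ω, (X ω - m.1) ^ 2 ∂P := integral_nonneg fun _ => sq_nonneg _
      _ = momentVar m := by
        rw [integral_sub_sq_eq_meanSqDev (hX P hP), meanSqDev_eq_momentVar_add, sub_self]; ring
  have hm2 : m.2 ≤ M := hM P hP
  have hm1 := abs_le.1 (Real.abs_le_sqrt (show m.1 ^ 2 ≤ M by unfold momentVar at hvar; linarith))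
  exact ⟨⟨hm1.1, integral_nonneg fun _ => sq_nonneg _⟩, ⟨hm1.2, hm2⟩⟩

end Mixtures

theorem stmt2 (S : Set (Measure Ω)) (hS : S.Nonempty)
    (hprob : ∀ P ∈ S, IsProbabilityMeasure P) (X : Ω → ℝ)
    (hX : ∀ P ∈ S, MemLp X 2 P)
    (hbdd : BddAbove ((fun P => ∫ ω, (X ω) ^ 2 ∂P) '' S)) :
    (⨅ μ : ℝ, sSup ((fun P => ∫ ω, (X ω - μ) ^ 2 ∂P) '' S)) =
      sSup ((fun P => varP P X) '' convHullP S) ∧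
    ∃ μ₀ : ℝ, sSup ((fun P => ∫ ω, (X ω - μ₀) ^ 2 ∂P) '' S) =
      sSup ((fun P => varP P X) '' convHullP S) := by
  obtain ⟨M, hM⟩ := hbdd
  have hfin : ∀ P ∈ S, IsFiniteMeasure P := fun P hP => have := hprob P hP; inferInstance
  have hupper : ∀ μ : ℝ, sSup ((fun P => ∫ ω, (X ω - μ) ^ 2 ∂P) '' S) =
      upperMeanSqDev (moments X '' S) μ := fun μ => by
    rw [upperMeanSqDev, image_image]
    exact congrArg sSup (image_congr fun P hP =>
      have := hprob P hP; integral_sub_sq_eq_meanSqDev (hX P hP) μ)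
  have hvar : (fun P => varP P X) '' convHullP S = momentVar '' (moments X '' convHullP S) :=
    (image_image momentVar (moments X) _).symm
  have h := isLeast_range_upperMeanSqDev
    (isBounded_moments_image hprob hX fun P hP => hM (mem_image_of_mem _ hP)) (hS.image _)
    (image_subset_iff.2 fun Q hQ => moments_mem_convexHull hfin hX hQ)
    fun _ ⟨P, hP, hp⟩ _ ⟨Q, hQ, hq⟩ =>
      hp ▸ hq ▸ segment_subset_moments_image_convHullP hfin hX hP hQ
  simp_rw [hupper, hvar]
  exact ⟨h.isGLB.ciInf_eq, h.1⟩
end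

section
/- Let 𝒫 be a nonempty set of probability measures and X a random variable with uniformly bounded second moments over 𝒫. Then the lower variance V(X) := min over μ ∈ ℝ of (inf_{P∈𝒫} E_P[(X-μ)²]) equals inf_{P∈𝒫} Var_P(X), and this infimum over 𝒫 coincides with the infimum over the convex hull of 𝒫. -/
open MeasureTheory ENNReal

variable {Ω : Type*} [MeasurableSpace Ω]

/-!
Since `E_P[(X - μ)²] = Var_P(X) + (E_P[X] - μ)²`, every `μ` gives at least `inf_P Var_P(X)`.
The second-moment bound keeps the means `E_P[X]` in a compact interval, so along a minimising
sequence for the variance they have a limit point `μ₀`, which attains that infimum. For the convex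
hull, the law of total variance shows that the variance of a mixture is at least the mixture of
the variances, so mixing cannot lower the infimum.
-/

open Filter Topology

section InfAddSq

variable {α : Type*} {S : Set α} {V m : α → ℝ}

lemma bddBelow_image_add_sq_sub (hV : BddBelow (V '' S)) (μ : ℝ) :
    BddBelow ((fun a => V a + (m a - μ) ^ 2) '' S) := by
  obtain ⟨b, hb⟩ := hV
  refine ⟨b, ?_⟩
  rintro _ ⟨a, ha, rfl⟩
  exact (hb ⟨a, ha, rfl⟩).trans (le_add_of_nonneg_right (sq_nonneg _))

lemma sInf_le_sInf_add_sq_sub (hS : S.Nonempty) (hV : BddBelow (V '' S)) (μ : ℝ) :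
    sInf (V '' S) ≤ sInf ((fun a => V a + (m a - μ) ^ 2) '' S) := by
  refine le_csInf (hS.image _) ?_
  rintro _ ⟨a, ha, rfl⟩
  exact (csInf_le hV ⟨a, ha, rfl⟩).trans (le_add_of_nonneg_right (sq_nonneg _))

lemma exists_sInf_add_sq_sub_eq (hS : S.Nonempty) (hV : BddBelow (V '' S))
    (hm : Bornology.IsBounded (m '' S)) :
    ∃ μ₀, sInf ((fun a => V a + (m a - μ₀) ^ 2) '' S) = sInf (V '' S) := by
  obtain ⟨u, -, hu, huS⟩ := exists_seq_tendsto_sInf (hS.image V) hV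
  choose a haS hau using huS
  obtain ⟨μ₀, -, φ, hφ, hmφ⟩ := tendsto_subseq_of_bounded hm fun n => ⟨a n, haS n, rfl⟩
  refine ⟨μ₀, le_antisymm ?_ (sInf_le_sInf_add_sq_sub hS hV μ₀)⟩
  have hVφ : Tendsto (fun n => V (a (φ n))) atTop (𝓝 (sInf (V '' S))) := by
    rw [show u = fun n => V (a n) from funext fun n => (hau n).symm] at hu
    exact hu.comp hφ.tendsto_atTop
  have hlim := hVφ.add ((hmφ.sub_const μ₀).pow 2)
  rw [sub_self, zero_pow two_ne_zero, add_zero] at hlim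
  exact ge_of_tendsto' hlim fun n =>
    csInf_le (bddBelow_image_add_sq_sub hV μ₀) ⟨a (φ n), haS _, rfl⟩

lemma iInf_sInf_add_sq_sub_eq (hS : S.Nonempty) (hV : BddBelow (V '' S))
    (hm : Bornology.IsBounded (m '' S)) :
    ⨅ μ, sInf ((fun a => V a + (m a - μ) ^ 2) '' S) = sInf (V '' S) := by
  obtain ⟨μ₀, hμ₀⟩ := exists_sInf_add_sq_sub_eq hS hV hm
  have hbdd : BddBelow (Set.range fun μ => sInf ((fun a => V a + (m a - μ) ^ 2) '' S)) :=
    ⟨sInf (V '' S), Set.forall_mem_range.2 (sInf_le_sInf_add_sq_sub hS hV)⟩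
  exact le_antisymm (hμ₀ ▸ ciInf_le hbdd μ₀) (le_ciInf (sInf_le_sInf_add_sq_sub hS hV))

end InfAddSq

section Variance

variable {X : Ω → ℝ}

lemma varP_nonneg {P : Measure Ω} [IsProbabilityMeasure P] (hX : MemLp X 2 P) :
    0 ≤ varP P X := by
  simpa [varP, ProbabilityTheory.variance_eq_sub hX] using ProbabilityTheory.variance_nonneg X P

lemma sq_integral_le_integral_sq {P : Measure Ω} [IsProbabilityMeasure P] (hX : MemLp X 2 P) :
    (∫ ω, X ω ∂P) ^ 2 ≤ ∫ ω, X ω ^ 2 ∂P :=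
  sub_nonneg.1 (varP_nonneg hX)

lemma integral_sub_sq_eq_varP_add {P : Measure Ω} [IsProbabilityMeasure P] (hX : MemLp X 2 P)
    (μ : ℝ) : ∫ ω, (X ω - μ) ^ 2 ∂P = varP P X + (∫ ω, X ω ∂P - μ) ^ 2 := by
  have hX1 : Integrable X P := hX.integrable one_le_two
  have hX2 : Integrable (fun ω => X ω ^ 2) P := hX.integrable_sq
  calc ∫ ω, (X ω - μ) ^ 2 ∂P = ∫ ω, (X ω ^ 2 - 2 * μ * X ω) + μ ^ 2 ∂P := by
        congr 1; funext ω; ring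
    _ = (∫ ω, X ω ^ 2 ∂P) - 2 * μ * ∫ ω, X ω ∂P + μ ^ 2 := by
        have hX2' : Integrable (fun ω => X ω ^ 2 - 2 * μ * X ω) P := hX2.sub (hX1.const_mul _)
        rw [integral_add hX2' (integrable_const _),
          integral_sub hX2 (hX1.const_mul _), integral_const_mul, integral_const]
        simp
    _ = varP P X + (∫ ω, X ω ∂P - μ) ^ 2 := by unfold varP; ring

variable {ι : Type*} [Fintype ι] {w : ι → ℝ≥0∞} {P : ι → Measure Ω}

lemma integral_sum_smul_measure {E : Type*} [NormedAddCommGroup E] [NormedSpace ℝ E]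
    {f : Ω → E} (hw : ∀ i, w i ≠ ∞) (hf : ∀ i, Integrable f (P i)) :
    ∫ ω, f ω ∂(∑ i, w i • P i) = ∑ i, (w i).toReal • ∫ ω, f ω ∂P i := by
  rw [integral_finsetSum_measure fun i _ => (hf i).smul_measure (hw i)]
  simp only [integral_smul_measure]

lemma ne_top_of_sum_eq_one (hw : ∑ i, w i = 1) (i : ι) : w i ≠ ∞ :=
  ENNReal.sum_ne_top.1 (hw ▸ one_ne_top) i (Finset.mem_univ i)

lemma sum_toReal_eq_one (hw : ∑ i, w i = 1) : ∑ i, (w i).toReal = 1 := by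
  rw [← ENNReal.toReal_sum fun i _ => ne_top_of_sum_eq_one hw i, hw, toReal_one]

lemma varP_sum_smul (hw : ∑ i, w i = 1) (hX1 : ∀ i, Integrable X (P i))
    (hX2 : ∀ i, Integrable (fun ω => X ω ^ 2) (P i)) :
    varP (∑ i, w i • P i) X = ∑ i, (w i).toReal *
      (varP (P i) X + (∫ ω, X ω ∂P i - ∫ ω, X ω ∂(∑ i, w i • P i)) ^ 2) := by
  have hmean := integral_sum_smul_measure (ne_top_of_sum_eq_one hw) hX1
  set m := ∫ ω, X ω ∂(∑ i, w i • P i)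
  simp only [smul_eq_mul] at hmean
  unfold varP
  rw [integral_sum_smul_measure (ne_top_of_sum_eq_one hw) hX2]
  have hexpand : ∀ i, (w i).toReal * (∫ ω, X ω ^ 2 ∂P i - (∫ ω, X ω ∂P i) ^ 2
      + (∫ ω, X ω ∂P i - m) ^ 2) = (w i).toReal * ∫ ω, X ω ^ 2 ∂P i
      - 2 * m * ((w i).toReal * ∫ ω, X ω ∂P i) + m ^ 2 * (w i).toReal := fun i => by ring
  simp only [smul_eq_mul, hexpand, Finset.sum_add_distrib, Finset.sum_sub_distrib,
    ← Finset.mul_sum, ← hmean, sum_toReal_eq_one hw]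
  ring

lemma sum_toReal_mul_varP_le_varP_sum_smul (hw : ∑ i, w i = 1) (hX1 : ∀ i, Integrable X (P i))
    (hX2 : ∀ i, Integrable (fun ω => X ω ^ 2) (P i)) :
    ∑ i, (w i).toReal * varP (P i) X ≤ varP (∑ i, w i • P i) X := by
  rw [varP_sum_smul hw hX1 hX2]
  gcongr
  exact le_add_of_nonneg_right (sq_nonneg _)

lemma subset_convHullP (S : Set (Measure Ω)) : S ⊆ convHullP S :=
  fun Q hQ => ⟨1, fun _ => 1, fun _ => Q, by simp, fun _ => hQ, by simp⟩

lemma le_varP_of_mem_convHullP {S : Set (Measure Ω)} {v : ℝ} (hX1 : ∀ P ∈ S, Integrable X P)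
    (hX2 : ∀ P ∈ S, Integrable (fun ω => X ω ^ 2) P) (hv : ∀ P ∈ S, v ≤ varP P X)
    {Q : Measure Ω} (hQ : Q ∈ convHullP S) : v ≤ varP Q X := by
  obtain ⟨n, w, P, hw, hPS, rfl⟩ := hQ
  calc v = ∑ i, (w i).toReal * v := by rw [← Finset.sum_mul, sum_toReal_eq_one hw, one_mul]
    _ ≤ ∑ i, (w i).toReal * varP (P i) X := by gcongr with i; exact hv _ (hPS i)
    _ ≤ varP (∑ i, w i • P i) X :=
      sum_toReal_mul_varP_le_varP_sum_smul hw (fun i => hX1 _ (hPS i)) fun i => hX2 _ (hPS i)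

lemma sInf_varP_convHullP_eq {S : Set (Measure Ω)} (hS : S.Nonempty)
    (hX1 : ∀ P ∈ S, Integrable X P) (hX2 : ∀ P ∈ S, Integrable (fun ω => X ω ^ 2) P)
    (hbdd : BddBelow ((fun P => varP P X) '' S)) :
    sInf ((fun P => varP P X) '' S) = sInf ((fun P => varP P X) '' convHullP S) := by
  have hlower : sInf ((fun P => varP P X) '' S) ∈
      lowerBounds ((fun P => varP P X) '' convHullP S) := by
    rintro _ ⟨Q, hQ, rfl⟩
    exact le_varP_of_mem_convHullP hX1 hX2 (fun P hP => csInf_le hbdd ⟨P, hP, rfl⟩) hQ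
  exact le_antisymm (le_csInf ((hS.mono (subset_convHullP S)).image _) hlower)
    (csInf_le_csInf ⟨_, hlower⟩ (hS.image _) (Set.image_mono (subset_convHullP S)))

end Variance

theorem stmt3 (S : Set (Measure Ω)) (hS : S.Nonempty)
    (hprob : ∀ P ∈ S, IsProbabilityMeasure P) (X : Ω → ℝ)
    (hX : ∀ P ∈ S, MemLp X 2 P)
    (hbdd : BddAbove ((fun P => ∫ ω, (X ω) ^ 2 ∂P) '' S)) :
    (⨅ μ : ℝ, sInf ((fun P => ∫ ω, (X ω - μ) ^ 2 ∂P) '' S)) =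
      sInf ((fun P => varP P X) '' S) ∧
    (∃ μ₀ : ℝ, sInf ((fun P => ∫ ω, (X ω - μ₀) ^ 2 ∂P) '' S) =
      sInf ((fun P => varP P X) '' S)) ∧
    sInf ((fun P => varP P X) '' S) = sInf ((fun P => varP P X) '' convHullP S) := by
  have hvar : BddBelow ((fun P => varP P X) '' S) := by
    refine ⟨0, ?_⟩
    rintro _ ⟨P, hP, rfl⟩
    have := hprob P hP
    exact varP_nonneg (hX P hP)
  have hmean : Bornology.IsBounded ((fun P => ∫ ω, X ω ∂P) '' S) := by
    obtain ⟨C, hC⟩ := hbdd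
    refine (Metric.isBounded_Icc (-√C) √C).subset ?_
    rintro _ ⟨P, hP, rfl⟩
    have := hprob P hP
    exact abs_le.1 <| Real.abs_le_sqrt <|
      (sq_integral_le_integral_sq (hX P hP)).trans (hC ⟨P, hP, rfl⟩)
  have hdecomp : ∀ μ : ℝ, (fun P => ∫ ω, (X ω - μ) ^ 2 ∂P) '' S
      = (fun P => varP P X + (∫ ω, X ω ∂P - μ) ^ 2) '' S := fun μ =>
    Set.image_congr fun P hP => by
      have := hprob P hP
      exact integral_sub_sq_eq_varP_add (hX P hP) μ
  simp only [hdecomp]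
  exact ⟨iInf_sInf_add_sq_sub_eq hS hvar hmean, exists_sInf_add_sq_sub_eq hS hvar hmean,
    sInf_varP_convHullP_eq hS (fun P hP => have := hprob P hP; (hX P hP).integrable one_le_two)
      (fun P hP => (hX P hP).integrable_sq) hvar⟩
end

section
/- Let K ≥ 1 and m, n, k ∈ ℝ^K with coordinates μᵢ, νᵢ, κᵢ. Consider the quadratic program V = max over λ in the simplex Δ^K of (λᵀk − (λᵀm)(λᵀn)). Then the maximum is attained at a point of Δ^K supported on at most two coordinates; more precisely V = max over 1 ≤ i ≤ j ≤ K of max over λ ∈ [0,1] of (λκᵢ + (1−λ)κⱼ − (λμᵢ + (1−λ)μⱼ)(λνᵢ + (1−λ)νⱼ)). -/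
/-!
On the slice `{λ ∈ Δ | λᵀm = c}` of the simplex the objective equals `λᵀ(k - c • n)`, which is
linear. While `λ` has at least three nonzero coordinates, the two linear conditions `∑ dᵢ = 0`,
`dᵀm = 0` leave a nonzero direction `d` supported on the support of `λ`; moving along whichever of
`±d` does not decrease the linear objective until a coordinate vanishes stays in the slice and
shrinks the support. Hence every value on `Δ` is dominated by a value at a point with
at most two nonzero coordinates, that is, on an edge.
-/

open Finset Matrix Module Set

section SimplexSlice

variable {ι V : Type*} [Fintype ι] [AddCommGroup V] [Module ℝ V]

lemma exists_ne_zero_sum_eq_zero_of_finrank_succ_lt [FiniteDimensional ℝ V] (m : ι → V)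
    {S : Finset ι} (hS : finrank ℝ V + 1 < #S) :
    ∃ d : ι → ℝ, d ≠ 0 ∧ (∀ i ∉ S, d i = 0) ∧ ∑ i, d i = 0 ∧ ∑ i, d i • m i = 0 := by
  let Φ : (ι → ℝ) →ₗ[ℝ] (ℝ × V) × ({i // i ∉ S} → ℝ) :=
    ((Fintype.linearCombination ℝ fun _ => (1 : ℝ)).prod (Fintype.linearCombination ℝ m)).prod
      (LinearMap.funLeft ℝ ℝ Subtype.val)
  have hdim : finrank ℝ ((ℝ × V) × ({i // i ∉ S} → ℝ)) < finrank ℝ (ι → ℝ) := by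
    classical
    have := S.card_le_univ
    simp only [finrank_prod, finrank_self, finrank_fintype_fun_eq_card,
      Fintype.card_subtype_compl, Fintype.card_coe]
    omega
  obtain ⟨d, hd, hd0⟩ :=
    Submodule.exists_mem_ne_zero_of_ne_bot (LinearMap.ker_ne_bot_of_finrank_lt (f := Φ) hdim)
  simp only [LinearMap.ker_prod, Submodule.mem_inf, LinearMap.mem_ker,
    Fintype.linearCombination_apply, smul_eq_mul, mul_one, funext_iff, LinearMap.funLeft_apply,
    Pi.zero_apply, Subtype.forall, Φ] at hd
  exact ⟨d, hd0, hd.2, hd.1.1, hd.1.2⟩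

lemma exists_pos_add_smul_nonneg_and_apply_eq_zero {l d : ι → ℝ} (hl : ∀ i, 0 ≤ l i)
    (hd : ∀ i, l i = 0 → d i = 0) (hneg : ∃ i, d i < 0) :
    ∃ s : ℝ, 0 < s ∧ (∀ i, 0 ≤ (l + s • d) i) ∧ ∃ i, l i ≠ 0 ∧ (l + s • d) i = 0 := by
  classical
  obtain ⟨q, hq, hmin⟩ :=
    exists_min_image {i | d i < 0} (fun i => l i / -d i) (by simpa [Finset.Nonempty] using hneg)
  have hdq : d q < 0 := (mem_filter.1 hq).2
  have hlq : 0 < l q := (hl q).lt_of_ne' fun h => hdq.ne (hd q h)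
  have hs : 0 < l q / -d q := div_pos hlq (neg_pos.2 hdq)
  refine ⟨l q / -d q, hs, fun i => ?_, q, hlq.ne', ?_⟩
  · rcases lt_or_ge (d i) 0 with hdi | hdi
    · have := (le_div_iff₀ (neg_pos.2 hdi)).1 (hmin i (by simpa using hdi))
      simp only [Pi.add_apply, Pi.smul_apply, smul_eq_mul]
      linarith
    · exact add_nonneg (hl i) (mul_nonneg hs.le hdi)
  · simp only [Pi.add_apply, Pi.smul_apply, smul_eq_mul]
    field_simp [hdq.ne]
    ring

lemma exists_mem_stdSimplex_card_support_lt [FiniteDimensional ℝ V] (m : ι → V) (g : ι → ℝ)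
    {l : ι → ℝ} (hl : l ∈ stdSimplex ℝ ι) (hcard : finrank ℝ V + 1 < #{i | l i ≠ 0}) :
    ∃ l' ∈ stdSimplex ℝ ι, #{i | l' i ≠ 0} < #{i | l i ≠ 0} ∧
      ∑ i, l' i • m i = ∑ i, l i • m i ∧ l ⬝ᵥ g ≤ l' ⬝ᵥ g := by
  obtain ⟨d, hd0, hdl, hd1, hdm⟩ := exists_ne_zero_sum_eq_zero_of_finrank_succ_lt m hcard
  wlog hdg : 0 ≤ d ⬝ᵥ g generalizing d
  · refine this (-d) (neg_ne_zero.2 hd0) (by simpa using hdl) (by simp [hd1]) (by simp [hdm]) ?_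
    rw [neg_dotProduct]
    linarith
  have hneg : ∃ i, d i < 0 := by
    by_contra! h
    exact hd0 (funext fun i => (sum_eq_zero_iff_of_nonneg fun i _ => h i).1 hd1 i (mem_univ i))
  obtain ⟨s, hs, hnonneg, q, hlq, hq⟩ :=
    exists_pos_add_smul_nonneg_and_apply_eq_zero hl.1 (fun i hi => hdl i (by simpa using hi)) hneg
  refine ⟨l + s • d, ⟨hnonneg, ?_⟩, card_lt_card ?_, ?_, ?_⟩
  · simp [sum_add_distrib, ← mul_sum, hd1, hl.2]
  · refine (Finset.ssubset_iff_of_subset fun i => ?_).2 ⟨q, by simpa using hlq, by simpa using hq⟩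
    simp only [mem_filter_univ, Pi.add_apply, Pi.smul_apply, smul_eq_mul]
    contrapose!
    intro hi
    simp [hi, hdl i (by simpa using hi)]
  · simp [add_smul, sum_add_distrib, mul_smul, ← smul_sum, hdm]
  · rw [add_dotProduct, smul_dotProduct, smul_eq_mul]
    exact le_add_of_nonneg_right (mul_nonneg hs.le hdg)

theorem exists_mem_stdSimplex_card_support_le [FiniteDimensional ℝ V] (m : ι → V) (g : ι → ℝ)
    {l : ι → ℝ} (hl : l ∈ stdSimplex ℝ ι) :
    ∃ l' ∈ stdSimplex ℝ ι, #{i | l' i ≠ 0} ≤ finrank ℝ V + 1 ∧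
      ∑ i, l' i • m i = ∑ i, l i • m i ∧ l ⬝ᵥ g ≤ l' ⬝ᵥ g := by
  induction hN : #{i | l i ≠ 0} using Nat.strong_induction_on generalizing l with
  | _ N ih =>
  by_cases hcard : N ≤ finrank ℝ V + 1
  · exact ⟨l, hl, hN ▸ hcard, rfl, le_rfl⟩
  obtain ⟨l₁, hl₁, hlt, hm₁, hg₁⟩ :=
    exists_mem_stdSimplex_card_support_lt m g hl (hN ▸ not_le.1 hcard)
  obtain ⟨l₂, hl₂, hcard₂, hm₂, hg₂⟩ := ih _ (hN ▸ hlt) hl₁ rfl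
  exact ⟨l₂, hl₂, hcard₂, hm₂.trans hm₁, hg₁.trans hg₂⟩

end SimplexSlice

section Edges

variable {ι : Type*} [Fintype ι] [DecidableEq ι]

lemma dotProduct_edge (i j : ι) (t : ℝ) (f : ι → ℝ) :
    (t • Pi.single i 1 + (1 - t) • Pi.single j 1 : ι → ℝ) ⬝ᵥ f = t * f i + (1 - t) * f j := by
  simp [add_dotProduct, smul_dotProduct]

lemma edge_mem_stdSimplex (i j : ι) {t : ℝ} (ht : t ∈ Icc (0 : ℝ) 1) :
    (t • Pi.single i 1 + (1 - t) • Pi.single j 1 : ι → ℝ) ∈ stdSimplex ℝ ι :=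
  convex_stdSimplex ℝ ι (single_mem_stdSimplex ℝ i) (single_mem_stdSimplex ℝ j) ht.1
    (sub_nonneg.2 ht.2) (add_sub_cancel _ _)

lemma exists_eq_edge_of_card_support_le_two {l : ι → ℝ} (hl : l ∈ stdSimplex ℝ ι)
    (h2 : #{i | l i ≠ 0} ≤ 2) :
    ∃ i j, ∃ t ∈ Icc (0 : ℝ) 1, l = t • Pi.single i 1 + (1 - t) • Pi.single j 1 := by
  set S : Finset ι := {i | l i ≠ 0}
  have hsum : ∑ i ∈ S, l i = 1 := (sum_filter_ne_zero _).trans hl.2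
  have hout : ∀ i ∉ S, l i = 0 := by simp [S]
  clear_value S
  interval_cases h : #S
  · simp [card_eq_zero.1 h] at hsum
  · obtain ⟨i, rfl⟩ := card_eq_one.1 h
    rw [sum_singleton] at hsum
    refine ⟨i, i, 1, by simp, funext fun p => ?_⟩
    by_cases hp : p = i
    · simp [hp, hsum]
    · simp [hp, hout p (by simpa using hp)]
  · obtain ⟨i, j, hij, rfl⟩ := card_eq_two.1 h
    rw [sum_pair hij] at hsum
    refine ⟨i, j, l i, ⟨hl.1 i, by linarith [hl.1 j]⟩, funext fun p => ?_⟩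
    by_cases hpi : p = i
    · simp [hpi, hij]
    by_cases hpj : p = j
    · simp [hpj, Ne.symm hij]
      linarith
    · simp [hpi, hpj, hout p (by simp [hpi, hpj])]

end Edges

theorem exists_edge_ge_of_mem_stdSimplex {ι : Type*} [Fintype ι] [DecidableEq ι]
    (k m n : ι → ℝ) {l : ι → ℝ} (hl : l ∈ stdSimplex ℝ ι) :
    ∃ i j, ∃ t ∈ Icc (0 : ℝ) 1, l ⬝ᵥ k - (l ⬝ᵥ m) * (l ⬝ᵥ n) ≤
      (t * k i + (1 - t) * k j) - (t * m i + (1 - t) * m j) * (t * n i + (1 - t) * n j) := by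
  obtain ⟨l', hl', hcard, hm, hg⟩ :=
    exists_mem_stdSimplex_card_support_le m (k - (l ⬝ᵥ m) • n) hl
  rw [finrank_self] at hcard
  obtain ⟨i, j, t, ht, rfl⟩ := exists_eq_edge_of_card_support_le_two hl' hcard
  refine ⟨i, j, t, ht, ?_⟩
  simp only [smul_eq_mul] at hm
  change _ ⬝ᵥ m = l ⬝ᵥ m at hm
  rw [dotProduct_sub, dotProduct_sub, dotProduct_smul, dotProduct_smul, ← hm] at hg
  simpa only [smul_eq_mul, ← dotProduct_edge, hm] using hg

theorem stmt14 (K : ℕ) (hK : 1 ≤ K) (m n k : Fin K → ℝ) :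
    sSup ((fun l : Fin K → ℝ =>
        (∑ i, l i * k i) - (∑ i, l i * m i) * (∑ i, l i * n i)) ''
          stdSimplex ℝ (Fin K)) =
      ⨆ i : Fin K, ⨆ j : Fin K,
        sSup ((fun t : ℝ =>
          (t * k i + (1 - t) * k j) -
            (t * m i + (1 - t) * m j) * (t * n i + (1 - t) * n j)) ''
              Set.Icc (0 : ℝ) 1) := by
  have : Nonempty (Fin K) := ⟨⟨0, hK⟩⟩
  apply le_antisymm
  · refine csSup_le ⟨_, mem_image_of_mem _ (single_mem_stdSimplex ℝ (⟨0, hK⟩ : Fin K))⟩ ?_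
    rintro _ ⟨l, hl, rfl⟩
    obtain ⟨i, j, t, ht, hle⟩ := exists_edge_ge_of_mem_stdSimplex k m n hl
    refine hle.trans (le_ciSup_of_le (finite_range _).bddAbove i
      (le_ciSup_of_le (finite_range _).bddAbove j (le_csSup ?_ ⟨t, ht, rfl⟩)))
    exact (isCompact_Icc.image (by fun_prop)).bddAbove
  · refine ciSup_le fun i => ciSup_le fun j =>
      csSup_le ((Set.nonempty_Icc.2 zero_le_one).image _) ?_
    rintro _ ⟨t, ht, rfl⟩
    refine le_csSup ((isCompact_stdSimplex ℝ _).image (by fun_prop)).bddAbove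
      ⟨_, edge_mem_stdSimplex i j ht, ?_⟩
    change (_ ⬝ᵥ k) - (_ ⬝ᵥ m) * (_ ⬝ᵥ n) = _
    simp only [dotProduct_edge]
end
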